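/- arXiv:1509.04963 — 2 statements merged into one kernel-verified Lean document; each statement's English description precedes it below -/
import Mathlib

section
/- Let w ∈ ℂⁿ have all entries non-zero, and for Λ ⊆ {1,…,n} let V_Λ = {v ∈ w^⊥ : v_j = 0 for all j ∉ Λ}. If Λ₁ and Λ₂ are non-empty subsets with Λ₁ ∩ Λ₂ ≠ ∅, then V_{Λ₁} + V_{Λ₂} = V_{Λ₁ ∪ Λ₂}. -/
open Finset

/-- For `w ∈ ℂⁿ` and `Λ ⊆ {1,…,n}`, the space `V_Λ = {v ∈ w^⊥ : v_j = 0 ∀ j ∉ Λ}`,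
where `w^⊥ = {v : Σⱼ vⱼ wⱼ = 0}`. -/
noncomputable def Vsub {n : ℕ} (w : Fin n → ℂ) (Λ : Finset (Fin n)) :
    Submodule ℂ (Fin n → ℂ) :=
  (LinearMap.ker (∑ j, w j • (LinearMap.proj j : (Fin n → ℂ) →ₗ[ℂ] ℂ))) ⊓
    ⨅ j ∈ {j | j ∉ Λ}, LinearMap.ker (LinearMap.proj j : (Fin n → ℂ) →ₗ[ℂ] ℂ)

section ObliqueProj

variable {K ι : Type*} [Field K] [Fintype ι] [DecidableEq ι]

/-- The projection onto `w^⊥` along the `k`-th basis vector. -/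
noncomputable def obliqueProj (w : ι → K) (k : ι) : (ι → K) →ₗ[K] (ι → K) :=
  LinearMap.id - (w k)⁻¹ • (dotProductBilin K K w).smulRight (Pi.single k 1)

theorem obliqueProj_apply (w : ι → K) (k : ι) (u : ι → K) :
    obliqueProj w k u = u - ((w ⬝ᵥ u) / w k) • Pi.single k 1 := by
  simp [obliqueProj, div_eq_inv_mul, mul_smul]

theorem dotProduct_obliqueProj {w : ι → K} {k : ι} (hk : w k ≠ 0) (u : ι → K) :
    w ⬝ᵥ obliqueProj w k u = 0 := by
  rw [obliqueProj_apply, dotProduct_sub, dotProduct_smul, dotProduct_single, mul_one,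
    smul_eq_mul, div_mul_cancel₀ _ hk, sub_self]

theorem obliqueProj_of_dotProduct_eq_zero {w u : ι → K} (k : ι) (hu : w ⬝ᵥ u = 0) :
    obliqueProj w k u = u := by
  simp [obliqueProj_apply, hu]

theorem obliqueProj_apply_of_ne (w u : ι → K) {j k : ι} (hjk : j ≠ k) :
    obliqueProj w k u j = u j := by
  simp [obliqueProj_apply, hjk]

end ObliqueProj

theorem mem_Vsub {n : ℕ} {w : Fin n → ℂ} {Λ : Finset (Fin n)} {v : Fin n → ℂ} :
    v ∈ Vsub w Λ ↔ w ⬝ᵥ v = 0 ∧ ∀ j ∉ Λ, v j = 0 := by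
  simp [Vsub, dotProduct, LinearMap.sum_apply]

theorem Vsub_mono {n : ℕ} (w : Fin n → ℂ) {Λ Λ' : Finset (Fin n)} (h : Λ ⊆ Λ') :
    Vsub w Λ ≤ Vsub w Λ' := fun _ hv ↦
  mem_Vsub.2 ⟨(mem_Vsub.1 hv).1, fun j hj ↦ (mem_Vsub.1 hv).2 j fun hjΛ ↦ hj (h hjΛ)⟩

theorem obliqueProj_mem_Vsub {n : ℕ} [DecidableEq (Fin n)] {w : Fin n → ℂ} {Λ : Finset (Fin n)} {k : Fin n}
    (hwk : w k ≠ 0) (hk : k ∈ Λ) {u : Fin n → ℂ} (hu : ∀ j ∉ Λ, u j = 0) :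
    obliqueProj w k u ∈ Vsub w Λ :=
  mem_Vsub.2 ⟨dotProduct_obliqueProj hwk u, fun j hj ↦ by
    rw [obliqueProj_apply_of_ne w u (ne_of_mem_of_not_mem hk hj).symm, hu j hj]⟩

theorem stmt3_general {n : ℕ} (w : Fin n → ℂ) (hw : ∀ j, w j ≠ 0)
    (Λ₁ Λ₂ : Finset (Fin n)) [DecidableEq (Fin n)]
    (h : (Λ₁ ∩ Λ₂).Nonempty) :
    Vsub w Λ₁ ⊔ Vsub w Λ₂ = Vsub w (Λ₁ ∪ Λ₂) := by
  refine le_antisymm (sup_le (Vsub_mono w subset_union_left) (Vsub_mono w subset_union_right))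
    fun v hv ↦ ?_
  obtain ⟨k, hk⟩ := h
  obtain ⟨hwv, hvΛ⟩ := mem_Vsub.1 hv
  -- `k ∈ Λ₁ ∩ Λ₂`, so projecting along `eₖ` keeps each piece of `v` in its `V_{Λᵢ}` and fixes `v`
  set v₁ : Fin n → ℂ := fun j ↦ if j ∈ Λ₁ then v j else 0
  have hv₁ : ∀ j ∉ Λ₁, v₁ j = 0 := fun j hj ↦ if_neg hj
  have hv₂ : ∀ j ∉ Λ₂, (v - v₁) j = 0 := fun j hj ↦ by
    by_cases hj₁ : j ∈ Λ₁
    · simp [v₁, hj₁]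
    · simp [v₁, hj₁, hvΛ j (by simp [hj, hj₁])]
  have hsplit : obliqueProj w k v₁ + obliqueProj w k (v - v₁) = v := by
    rw [← map_add, add_sub_cancel, obliqueProj_of_dotProduct_eq_zero k hwv]
  rw [← hsplit]
  exact Submodule.add_mem_sup (obliqueProj_mem_Vsub (hw k) (mem_inter.1 hk).1 hv₁)
    (obliqueProj_mem_Vsub (hw k) (mem_inter.1 hk).2 hv₂)

/-- If `Λ₁, Λ₂` are non-empty with `Λ₁ ∩ Λ₂ ≠ ∅` then `V_{Λ₁} + V_{Λ₂} = V_{Λ₁ ∪ Λ₂}`. -/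
theorem stmt3 {n : ℕ} (w : Fin n → ℂ) (hw : ∀ j, w j ≠ 0)
    (Λ₁ Λ₂ : Finset (Fin n)) [DecidableEq (Fin n)]
    (h₁ : Λ₁.Nonempty) (h₂ : Λ₂.Nonempty) (h : (Λ₁ ∩ Λ₂).Nonempty) :
    Vsub w Λ₁ ⊔ Vsub w Λ₂ = Vsub w (Λ₁ ∪ Λ₂) :=
  stmt3_general w hw Λ₁ Λ₂ h
end

section
/- Let t > 1 be an integer and u the real cube root of t³ − 1. If (x, y) ∈ ℤ² satisfies x³ − (t³−1)y³ = 1, then x − uy is a unit of norm 1 in ℤ[u], hence x − uy = (t − u)ⁿ for some integer n, and taking conjugates yields (t−u)ⁿ + ω(t−ωu)ⁿ + ω²(t−ω²u)ⁿ = 0 where ω is a primitive cube root of unity. -/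
/-!
Model `ℤ[∛d]` as `AdjoinRoot (X³ - d)`, so that `θ ↦ u`, `θ ↦ ωu`, `θ ↦ ω²u` are ring
homomorphisms. Then `x - yθ` is a unit, and once it is shown to be a power of `t - θ` in this
ring, the three conjugate identities follow by applying the three embeddings.

It remains to see that `t - θ` generates the units with positive real embedding. Its inverse
`E = t² + tu + u²` satisfies `1 < E < 3t²`. If `ζ = a + bu + cu² ≠ 1` is a unit with `1 ≤ ζ`,
then `b³ - dc³` is a nonzero integer (`u` is irrational), and the norm equation
`ζ · |a + bωu + cω²u²|² = 1` bounds the discriminant: `27 ζ d² ≤ 4((ζ + 1)² + 1)²`. For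
`d = t³ - 1` this rules out `ζ² ≤ E`. A unit strictly between `1` and `E` cannot exist either,
since it or `E / ζ` would have square at most `E`; so every positive unit is a power of `E`.
-/

open Polynomial

lemma IsPrimitiveRoot.sq_add_self_add_one {R : Type*} [CommRing R] [IsDomain R] {ω : R}
    (hω : IsPrimitiveRoot ω 3) : ω ^ 2 + ω + 1 = 0 := by
  linear_combination (by simpa [Finset.sum_range_succ] using hω.geom_sum_eq_zero (by norm_num) :
    1 + ω + ω ^ 2 = 0)

-- With `x, y, z = a, bu, cu²`: the discriminant bound for a unit `x + y + z ≥ 1` of norm one.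
lemma cube_sub_cube_sq_le {x y z : ℝ} (hN : x ^ 3 + y ^ 3 + z ^ 3 - 3 * x * y * z = 1)
    (hw : 1 ≤ x + y + z) :
    27 * (x + y + z) * (y ^ 3 - z ^ 3) ^ 2 ≤ 4 * ((x + y + z + 1) ^ 2 + 1) ^ 2 := by
  set w := x + y + z
  set s := y + z
  set δ := y - z
  have hQ : w * ((w - 3 / 2 * s) ^ 2 + 3 / 4 * δ ^ 2) = 1 := by
    simp only [w, s, δ]; linear_combination hN
  have hδ : w * δ ^ 2 ≤ 4 / 3 := by nlinarith [sq_nonneg (w - 3 / 2 * s)]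
  have hp : (w - 3 / 2 * s) ^ 2 ≤ 1 := by nlinarith [sq_nonneg δ, sq_nonneg (w - 3 / 2 * s)]
  obtain ⟨hp₁, hp₂⟩ := abs_le.mp ((sq_le_one_iff_abs_le_one _).mp hp)
  have hs : 3 * s ^ 2 ≤ 4 / 3 * (w + 1) ^ 2 := by nlinarith
  have hδ1 : δ ^ 2 ≤ 4 / 3 := by nlinarith [sq_nonneg δ]
  have hcube : y ^ 3 - z ^ 3 = δ * (3 * s ^ 2 + δ ^ 2) / 4 := by simp only [s, δ]; ring
  rw [hcube]
  calc 27 * w * (δ * (3 * s ^ 2 + δ ^ 2) / 4) ^ 2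
      = 27 / 16 * (w * δ ^ 2) * (3 * s ^ 2 + δ ^ 2) ^ 2 := by ring
    _ ≤ 27 / 16 * (4 / 3) * (4 / 3 * ((w + 1) ^ 2 + 1)) ^ 2 := by
        gcongr
        linarith
    _ = 4 * ((w + 1) ^ 2 + 1) ^ 2 := by ring

lemma sq_add_one_sq_lt {t w : ℝ} (ht : 2 ≤ t) (hw : 1 ≤ w) (hwt : w ^ 2 ≤ 3 * t ^ 2) :
    4 * ((w + 1) ^ 2 + 1) ^ 2 < 27 * w * (t ^ 3 - 1) ^ 2 := by
  have hd : 0 < t ^ 3 - 1 := by nlinarith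
  rcases le_or_gt w t with hwt' | hwt'
  · have h1 : 2 * ((w + 1) ^ 2 + 1) < 5 * (t ^ 3 - 1) := by nlinarith
    have h2 : 4 * ((w + 1) ^ 2 + 1) ^ 2 < 25 * (t ^ 3 - 1) ^ 2 := by nlinarith
    nlinarith
  · have hw2 : w ≤ 2 * t := by nlinarith
    have h1 : 2 * ((w + 1) ^ 2 + 1) < 7 * (t ^ 3 - 1) := by nlinarith
    have h2 : 4 * ((w + 1) ^ 2 + 1) ^ 2 < 49 * (t ^ 3 - 1) ^ 2 := by nlinarith
    nlinarith

abbrev CubeRootRing (d : ℤ) := AdjoinRoot (X ^ 3 - C d : ℤ[X])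

namespace CubeRootRing

variable {d : ℤ}

noncomputable def θ (d : ℤ) : CubeRootRing d := AdjoinRoot.root _

lemma θ_pow_three : θ d ^ 3 = d := by
  have h := AdjoinRoot.eval₂_root (X ^ 3 - C d : ℤ[X])
  rw [eval₂_sub, eval₂_X_pow, eval₂_C, sub_eq_zero] at h
  rw [θ, h]
  rfl

noncomputable def lift {A : Type*} [CommRing A] (r : A) (hr : r ^ 3 = d) :
    CubeRootRing d →+* A :=
  AdjoinRoot.lift (Int.castRingHom A) r (by rw [eval₂_sub, eval₂_X_pow, eval₂_C, hr]; simp)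

@[simp]
lemma lift_θ {A : Type*} [CommRing A] (r : A) (hr : r ^ 3 = d) : lift r hr (θ d) = r :=
  AdjoinRoot.lift_root _

lemma exists_eq_add_mul (α : CubeRootRing d) :
    ∃ a b c : ℤ, α = a + b * θ d + c * θ d ^ 2 := by
  have hmonic : (X ^ 3 - C d : ℤ[X]).Monic := monic_X_pow_sub_C d (by norm_num)
  have : Nontrivial (CubeRootRing d) :=
    AdjoinRoot.nontrivial _ (by rw [degree_X_pow_sub_C (by norm_num)]; norm_num)
  obtain ⟨f, hf, rfl⟩ := (AdjoinRoot.powerBasis' hmonic).exists_eq_aeval α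
  rw [AdjoinRoot.powerBasis'_dim, natDegree_X_pow_sub_C] at hf
  refine ⟨f.coeff 0, f.coeff 1, f.coeff 2, ?_⟩
  rw [aeval_eq_sum_range' hf]
  simp [Finset.sum_range_succ, θ, Algebra.smul_def]

@[simp]
lemma lift_add_mul {A : Type*} [CommRing A] (r : A) (hr : r ^ 3 = d) (a b c : ℤ) :
    lift r hr (a + b * θ d + c * θ d ^ 2) = a + b * r + c * r ^ 2 := by
  simp

def cubicNorm (d a b c : ℤ) : ℤ := a ^ 3 + d * b ^ 3 + d ^ 2 * c ^ 3 - 3 * d * a * b * c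

lemma cubicNorm_eq_prod {r ω : ℂ} (hr : r ^ 3 = d) (hω : IsPrimitiveRoot ω 3) (a b c : ℤ) :
    (cubicNorm d a b c : ℂ) = (a + b * r + c * r ^ 2) * (a + b * (ω * r) + c * (ω * r) ^ 2)
      * (a + b * (ω ^ 2 * r) + c * (ω ^ 2 * r) ^ 2) := by
  have hω3 : ω ^ 3 = 1 := hω.pow_eq_one
  have hω2 := hω.sq_add_self_add_one
  have hconj : (a + b * (ω * r) + c * (ω * r) ^ 2) * (a + b * (ω ^ 2 * r) + c * (ω ^ 2 * r) ^ 2)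
      = a ^ 2 + b ^ 2 * r ^ 2 + c ^ 2 * r ^ 4 - a * b * r - a * c * r ^ 2 - b * c * r ^ 3 := by
    linear_combination (a * b * r + a * c * r ^ 2 + b * c * r ^ 3) * hω2
      + (a * c * r ^ 2 * ω + b ^ 2 * r ^ 2 + b * c * r ^ 3 * (ω ^ 2 + ω)
        + c ^ 2 * r ^ 4 * (ω ^ 3 + 1)) * hω3
  rw [mul_assoc, hconj, cubicNorm]
  push_cast
  linear_combination (-(b:ℂ) ^ 3 - c ^ 3 * (r ^ 3 + d) + 3 * a * b * c) * hr

lemma isUnit_cubicNorm (ε : (CubeRootRing d)ˣ) {a b c : ℤ}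
    (hε : (ε : CubeRootRing d) = a + b * θ d + c * θ d ^ 2) : IsUnit (cubicNorm d a b c) := by
  obtain ⟨r, hr⟩ := IsAlgClosed.exists_pow_nat_eq (d : ℂ) three_pos
  have hω := Complex.isPrimitiveRoot_exp 3 three_ne_zero
  set ω := Complex.exp (2 * Real.pi * Complex.I / (3 : ℕ))
  have hω3 : ω ^ 3 = 1 := hω.pow_eq_one
  let N : CubeRootRing d →* ℂ := (lift r hr : CubeRootRing d →* ℂ)
    * (lift (ω * r) (by linear_combination r ^ 3 * hω3 + hr) : CubeRootRing d →* ℂ)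
    * (lift (ω ^ 2 * r) (by linear_combination (ω ^ 3 + 1) * r ^ 3 * hω3 + hr) :
        CubeRootRing d →* ℂ)
  have hN : ∀ a b c : ℤ, N (a + b * θ d + c * θ d ^ 2) = cubicNorm d a b c := by
    intro a b c
    simp [N, cubicNorm_eq_prod hr hω]
  obtain ⟨a', b', c', hε'⟩ := exists_eq_add_mul (ε⁻¹ : (CubeRootRing d)ˣ).val
  refine IsUnit.of_mul_eq_one (cubicNorm d a' b' c') (Int.cast_injective (α := ℂ) ?_)
  rw [Int.cast_mul, ← hN, ← hN, ← hε, ← hε', ← map_mul, Units.mul_inv, map_one,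
    Int.cast_one]

lemma cast_cubicNorm {u : ℝ} (hu : u ^ 3 = d) (a b c : ℤ) :
    (cubicNorm d a b c : ℝ)
      = a ^ 3 + (b * u) ^ 3 + (c * u ^ 2) ^ 3 - 3 * a * (b * u) * (c * u ^ 2) := by
  rw [cubicNorm]
  push_cast
  linear_combination (-(b:ℝ) ^ 3 - c ^ 3 * (u ^ 3 + d) + 3 * a * b * c) * hu

lemma cubicNorm_eq_one_of_pos {u : ℝ} (hu : u ^ 3 = d) (ε : (CubeRootRing d)ˣ) {a b c : ℤ}
    (hε : (ε : CubeRootRing d) = a + b * θ d + c * θ d ^ 2) (hpos : 0 < lift u hu ε) :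
    cubicNorm d a b c = 1 := by
  rw [hε, lift_add_mul] at hpos
  refine (Int.isUnit_iff.mp (isUnit_cubicNorm ε hε)).resolve_right fun hneg => ?_
  have h := cast_cubicNorm hu a b c
  rw [hneg, Int.cast_neg, Int.cast_one] at h
  have hQ : 0 ≤ ((a - b * u) ^ 2 + (b * u - c * u ^ 2) ^ 2 + (c * u ^ 2 - a) ^ 2 : ℝ) / 2 := by
    positivity
  nlinarith [mul_nonneg hpos.le hQ]

lemma cube_sub_mul_cube_ne_zero {u : ℝ} (hu : u ^ 3 = d) (hirr : Irrational u) {b c : ℤ}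
    (hbc : ¬(b = 0 ∧ c = 0)) : b ^ 3 - d * c ^ 3 ≠ 0 := by
  intro hm
  rcases eq_or_ne c 0 with rfl | hc
  · exact hbc ⟨pow_eq_zero_iff three_ne_zero |>.mp (by simpa using hm), rfl⟩
  · have hcube : ((b / c : ℚ) : ℝ) ^ 3 = u ^ 3 := by
      rw [hu]
      push_cast
      rw [div_pow, div_eq_iff (by positivity)]
      exact_mod_cast sub_eq_zero.mp hm
    exact hirr ⟨_, (Odd.pow_inj (by decide)).mp hcube⟩

noncomputable def binomialUnit (x y : ℤ) (h : x ^ 3 - d * y ^ 3 = 1) : (CubeRootRing d)ˣ where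
  val := x - y * θ d
  inv := x ^ 2 + x * y * θ d + y ^ 2 * θ d ^ 2
  val_inv := by
    have h' := congrArg (Int.cast : ℤ → CubeRootRing d) h
    push_cast at h'
    linear_combination h' - (y : CubeRootRing d) ^ 3 * θ_pow_three
  inv_val := by
    have h' := congrArg (Int.cast : ℤ → CubeRootRing d) h
    push_cast at h'
    linear_combination h' - (y : CubeRootRing d) ^ 3 * θ_pow_three

@[simp]
lemma val_binomialUnit (x y : ℤ) (h : x ^ 3 - d * y ^ 3 = 1) :
    (binomialUnit x y h : CubeRootRing d) = x - y * θ d := rfl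

@[simp]
lemma val_inv_binomialUnit (x y : ℤ) (h : x ^ 3 - d * y ^ 3 = 1) :
    ((binomialUnit x y h)⁻¹ : (CubeRootRing d)ˣ)
      = (x ^ 2 + x * y * θ d + y ^ 2 * θ d ^ 2 : CubeRootRing d) := rfl

@[simp]
lemma lift_binomialUnit {A : Type*} [CommRing A] (r : A) (hr : r ^ 3 = d) (x y : ℤ)
    (h : x ^ 3 - d * y ^ 3 = 1) : lift r hr (binomialUnit x y h) = x - y * r := by
  simp

@[simp]
lemma lift_inv_binomialUnit {A : Type*} [CommRing A] (r : A) (hr : r ^ 3 = d) (x y : ℤ)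
    (h : x ^ 3 - d * y ^ 3 = 1) :
    lift r hr ↑(binomialUnit x y h)⁻¹ = x ^ 2 + x * y * r + y ^ 2 * r ^ 2 := by
  simp

lemma lift_binomialUnit_pos (r : ℝ) (hr : r ^ 3 = d) (x y : ℤ) (h : x ^ 3 - d * y ^ 3 = 1) :
    0 < lift r hr (binomialUnit x y h) := by
  have h₁ : lift r hr (binomialUnit x y h) * lift r hr ↑(binomialUnit x y h)⁻¹ = 1 := by
    rw [← map_mul, Units.mul_inv, map_one]
  rw [lift_binomialUnit, lift_inv_binomialUnit] at h₁
  rw [lift_binomialUnit]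
  nlinarith [sq_nonneg (2 * x + y * r), sq_nonneg (y * r)]

lemma lift_units_zpow {K : Type*} [Field K] (r : K) (hr : r ^ 3 = d) (ε : (CubeRootRing d)ˣ)
    (n : ℤ) : lift r hr ↑(ε ^ n) = lift r hr ε ^ n := by
  have h := congrArg Units.val (map_zpow (Units.map (lift r hr : CubeRootRing d →* K)) ε n)
  rwa [Units.val_zpow_eq_zpow_val, Units.coe_map, Units.coe_map] at h

section CubeRootOfCubeSubOne

variable {t : ℤ} {u : ℝ}

lemma mem_Ioo_of_pow_three_eq (ht : 1 < t) (hu : u ^ 3 = ((t ^ 3 - 1 : ℤ) : ℝ)) :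
    u ∈ Set.Ioo ((t : ℝ) - 1) t := by
  have hmono := Odd.strictMono_pow (R := ℝ) (by decide : Odd 3)
  have ht' : (2 : ℝ) ≤ t := by exact_mod_cast ht
  push_cast at hu
  constructor
  · exact hmono.lt_iff_lt.mp (by rw [hu]; nlinarith)
  · exact hmono.lt_iff_lt.mp (by rw [hu]; linarith)

lemma irrational_of_pow_three_eq (ht : 1 < t) (hu : u ^ 3 = ((t ^ 3 - 1 : ℤ) : ℝ)) :
    Irrational u := by
  refine irrational_nrt_of_notint_nrt 3 _ hu ?_ three_pos
  rintro ⟨m, rfl⟩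
  obtain ⟨h₁, h₂⟩ := mem_Ioo_of_pow_three_eq ht hu
  have h₁' : t - 1 < m := by exact_mod_cast h₁
  have h₂' : m < t := by exact_mod_cast h₂
  omega

noncomputable def fundamentalUnit (t : ℤ) : (CubeRootRing (t ^ 3 - 1))ˣ :=
  binomialUnit t 1 (by ring)

lemma eq_one_of_one_le_of_sq_le (ht : 1 < t) (hu : u ^ 3 = ((t ^ 3 - 1 : ℤ) : ℝ))
    (ζ : (CubeRootRing (t ^ 3 - 1))ˣ) (h₁ : 1 ≤ lift u hu ζ)
    (h₂ : lift u hu ζ ^ 2 ≤ lift u hu ↑(fundamentalUnit t)⁻¹) : ζ = 1 := by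
  obtain ⟨a, b, c, hζ⟩ := exists_eq_add_mul (ζ : CubeRootRing (t ^ 3 - 1))
  have hN := cubicNorm_eq_one_of_pos hu ζ hζ (by linarith)
  have hNR := cast_cubicNorm hu a b c
  rw [hN, Int.cast_one, eq_comm] at hNR
  rw [hζ, lift_add_mul] at h₁ h₂
  simp only [fundamentalUnit, lift_inv_binomialUnit, Int.cast_one, mul_one, one_mul, one_pow]
    at h₂
  by_cases hbc : b = 0 ∧ c = 0
  · obtain ⟨rfl, rfl⟩ := hbc
    simp only [Int.cast_zero, zero_mul, add_zero] at h₁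
    have ha : a = 1 :=
      (pow_eq_one_iff_of_nonneg (by exact_mod_cast (zero_le_one.trans h₁)) three_ne_zero).mp
        (by simpa [cubicNorm] using hN)
    ext
    simp [hζ, ha]
  · exfalso
    obtain ⟨hu₁, hu₂⟩ := mem_Ioo_of_pow_three_eq ht hu
    have ht' : (2 : ℝ) ≤ t := by exact_mod_cast ht
    have hm := cube_sub_mul_cube_ne_zero hu (irrational_of_pow_three_eq ht hu) hbc
    have hm₁ : (1 : ℝ) ≤ ((b ^ 3 - (t ^ 3 - 1) * c ^ 3 : ℤ) : ℝ) ^ 2 := by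
      exact_mod_cast (one_le_sq_iff_one_le_abs _).mpr (Int.one_le_abs hm)
    have hdisc := cube_sub_cube_sq_le hNR h₁
    have hcube : ((b : ℝ) * u) ^ 3 - (c * u ^ 2) ^ 3
        = ((t : ℝ) ^ 3 - 1) * ((b ^ 3 - (t ^ 3 - 1) * c ^ 3 : ℤ) : ℝ) := by
      push_cast at hu ⊢
      linear_combination ((b:ℝ) ^ 3 - c ^ 3 * (u ^ 3 + t ^ 3 - 1)) * hu
    rw [hcube] at hdisc
    have hlt := sq_add_one_sq_lt ht' h₁ (by nlinarith)
    have hd : 0 < (t : ℝ) ^ 3 - 1 := by nlinarith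
    nlinarith [mul_le_mul_of_nonneg_left hm₁
      (by positivity : (0 : ℝ) ≤ 27 * (a + b * u + c * u ^ 2) * ((t : ℝ) ^ 3 - 1) ^ 2)]

lemma exists_eq_fundamentalUnit_zpow (ht : 1 < t) (hu : u ^ 3 = ((t ^ 3 - 1 : ℤ) : ℝ))
    (ε : (CubeRootRing (t ^ 3 - 1))ˣ) (hε : 0 < lift u hu ε) :
    ∃ n : ℤ, ε = fundamentalUnit t ^ n := by
  set σ := lift u hu
  have hinv (ξ : (CubeRootRing (t ^ 3 - 1))ˣ) : σ ↑ξ⁻¹ = (σ ξ)⁻¹ := by simp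
  set E := σ ↑(fundamentalUnit t)⁻¹
  have hE : 1 < E := by
    obtain ⟨hu₁, hu₂⟩ := mem_Ioo_of_pow_three_eq ht hu
    have ht' : (2 : ℝ) ≤ t := by exact_mod_cast ht
    simp only [E, σ, fundamentalUnit, lift_inv_binomialUnit]
    push_cast
    nlinarith
  obtain ⟨k, hk₁, hk₂⟩ := exists_mem_Ico_zpow hε hE
  set ζ := ε * (fundamentalUnit t)⁻¹ ^ (-k)
  have hζ : σ ζ = σ ε / E ^ k := by
    rw [Units.val_mul, map_mul, lift_units_zpow, zpow_neg, div_eq_mul_inv]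
  have hEk : 0 < E ^ k := zpow_pos (zero_lt_one.trans hE) k
  have hζ₁ : 1 ≤ σ ζ := by rwa [hζ, le_div_iff₀ hEk, one_mul]
  have hζ₂ : σ ζ < E := by
    rwa [hζ, div_lt_iff₀ hEk, ← zpow_one_add₀ (zero_lt_one.trans hE).ne', add_comm]
  by_cases hsq : σ ζ ^ 2 ≤ E
  · refine ⟨-k, ?_⟩
    have h1 := eq_one_of_one_le_of_sq_le ht hu ζ hζ₁ hsq
    rwa [mul_eq_one_iff_eq_inv, inv_zpow', neg_neg, ← zpow_neg] at h1
  · rw [not_le] at hsq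
    have hζpos : 0 < σ ζ := zero_lt_one.trans_le hζ₁
    have hval : σ ↑((fundamentalUnit t)⁻¹ * ζ⁻¹) = E / σ ζ := by
      rw [Units.val_mul, map_mul, hinv ζ, div_eq_mul_inv]
    have h1 := eq_one_of_one_le_of_sq_le ht hu ((fundamentalUnit t)⁻¹ * ζ⁻¹)
      (by rw [hval, le_div_iff₀ hζpos, one_mul]; exact hζ₂.le)
      (by rw [hval, div_pow, div_le_iff₀ (by positivity)]; nlinarith)
    rw [mul_eq_one_iff_eq_inv, inv_inv] at h1
    rw [← h1] at hζ₂
    exact (lt_irrefl _ hζ₂).elim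

lemma lift_binomialUnit_eq_zpow {K : Type*} [Field K] (r : K)
    (hr : r ^ 3 = ((t ^ 3 - 1 : ℤ) : K)) {x y n : ℤ} {h : x ^ 3 - (t ^ 3 - 1) * y ^ 3 = 1}
    (hn : binomialUnit x y h = fundamentalUnit t ^ n) : (x : K) - y * r = ((t : K) - r) ^ n := by
  simpa [lift_units_zpow, fundamentalUnit] using
    congrArg (fun ξ : (CubeRootRing (t ^ 3 - 1))ˣ => lift r hr ξ) hn

end CubeRootOfCubeSubOne

end CubeRootRing

open CubeRootRing

theorem stmt14_general (t : ℤ) (ht : 1 < t) (u : ℝ) (hu : u ^ 3 = (t : ℝ) ^ 3 - 1)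
    (ω : ℂ) (hω : IsPrimitiveRoot ω 3)
    (x y : ℤ) (hxy : x ^ 3 - (t ^ 3 - 1) * y ^ 3 = 1) :
    (∃ v : (Algebra.adjoin ℤ ({u} : Set ℝ))ˣ,
        ((v : Algebra.adjoin ℤ ({u} : Set ℝ)) : ℝ) = (x : ℝ) - u * y) ∧
      ((x : ℂ) - u * y) * ((x : ℂ) - ω * u * y) * ((x : ℂ) - ω ^ 2 * u * y) = 1 ∧
      ∃ n : ℤ, (x : ℝ) - u * y = ((t : ℝ) - u) ^ n ∧
        ((t : ℂ) - u) ^ n + ω * ((t : ℂ) - ω * u) ^ n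
          + ω ^ 2 * ((t : ℂ) - ω ^ 2 * u) ^ n = 0 := by
  have hω2 := hω.sq_add_self_add_one
  have hω3 : ω ^ 3 = 1 := hω.pow_eq_one
  have hu' : u ^ 3 = ((t ^ 3 - 1 : ℤ) : ℝ) := by push_cast; exact hu
  have huC : (u : ℂ) ^ 3 = ((t ^ 3 - 1 : ℤ) : ℂ) := by
    exact_mod_cast congrArg Complex.ofReal hu'
  set ε := binomialUnit x y hxy
  refine ⟨?_, ?_, ?_⟩
  · let r : Algebra.adjoin ℤ ({u} : Set ℝ) := ⟨u, Algebra.self_mem_adjoin_singleton ℤ u⟩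
    have hr : r ^ 3 = ((t ^ 3 - 1 : ℤ) : Algebra.adjoin ℤ ({u} : Set ℝ)) :=
      Subtype.ext (by simpa using hu')
    exact ⟨Units.map (lift r hr : _ →* _) ε, by simp [ε, r, mul_comm]⟩
  · have hxyC : (x : ℂ) ^ 3 - ((t ^ 3 - 1 : ℤ) : ℂ) * y ^ 3 = 1 := by exact_mod_cast hxy
    linear_combination (-(x : ℂ) ^ 2 * u * y + x * u ^ 2 * y ^ 2 * ω) * hω2
      - (u : ℂ) ^ 3 * y ^ 3 * hω3 + hxyC - (y : ℂ) ^ 3 * huC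
  · obtain ⟨n, hn⟩ := exists_eq_fundamentalUnit_zpow ht hu' ε (lift_binomialUnit_pos u hu' x y hxy)
    refine ⟨n, by rw [← lift_binomialUnit_eq_zpow u hu' hn, mul_comm], ?_⟩
    rw [← lift_binomialUnit_eq_zpow (u : ℂ) huC hn,
      ← lift_binomialUnit_eq_zpow (ω * u) (by linear_combination (u : ℂ) ^ 3 * hω3 + huC) hn,
      ← lift_binomialUnit_eq_zpow (ω ^ 2 * u)
        (by linear_combination (ω ^ 3 + 1) * (u : ℂ) ^ 3 * hω3 + huC) hn]
    linear_combination ((x : ℂ) - y * u) * hω2 - (y : ℂ) * u * ω * hω3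

/-- For an integer `t > 1` and `u` the real cube root of `t³−1`: any integer solution
of `x³ − (t³−1)y³ = 1` gives a unit `x − uy` of `ℤ[u]` of norm `1`, which is an
integral power `(t−u)ⁿ`, and taking conjugates (via a primitive cube root of unity
`ω`) yields `(t−u)ⁿ + ω(t−ωu)ⁿ + ω²(t−ω²u)ⁿ = 0`. -/
theorem stmt14 (t : ℤ) (ht : 1 < t) (u : ℝ) (hu : u ^ 3 = (t : ℝ) ^ 3 - 1)
    (hupos : 0 < u) (ω : ℂ) (hω : IsPrimitiveRoot ω 3)
    (x y : ℤ) (hxy : x ^ 3 - (t ^ 3 - 1) * y ^ 3 = 1) :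
    (∃ v : (Algebra.adjoin ℤ ({u} : Set ℝ))ˣ,
        ((v : Algebra.adjoin ℤ ({u} : Set ℝ)) : ℝ) = (x : ℝ) - u * y) ∧
      ((x : ℂ) - u * y) * ((x : ℂ) - ω * u * y) * ((x : ℂ) - ω ^ 2 * u * y) = 1 ∧
      ∃ n : ℤ, (x : ℝ) - u * y = ((t : ℝ) - u) ^ n ∧
        ((t : ℂ) - u) ^ n + ω * ((t : ℂ) - ω * u) ^ n
          + ω ^ 2 * ((t : ℂ) - ω ^ 2 * u) ^ n = 0 :=
  stmt14_general t ht u hu ω hω x y hxy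
end
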